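/- arXiv:0809.4828 — 6 statements merged into one kernel-verified Lean document; each statement's English description precedes it below -/
import Mathlib

section
/- Let γ_0,γ_1,γ_2,γ_3 be the Weyl gamma matrices. For every family γ'_0,γ'_1,γ'_2,γ'_3 of complex 4×4 matrices satisfying the Clifford relations there exists an invertible complex 4×4 matrix L such that γ'_a = L γ_a L⁻¹ for all a ∈ {0,1,2,3}; moreover L is unique up to a non-zero complex factor, i.e. if K is invertible and also satisfies γ'_a = K γ_a K⁻¹ for all a, then K = c·L for some non-zero c ∈ ℂ. -/
open Matrix

noncomputable section

/-- The Minkowski metric components `diag(1,-1,-1,-1)`. -/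
def minkEta : Fin 4 → Fin 4 → ℝ := fun a b =>
  if a = b then (if a = 0 then 1 else -1) else 0

/-- A family of complex 4×4 matrices satisfies the Clifford relations if
`γ_a γ_b + γ_b γ_a = 2 η_{ab} I`. -/
def CliffordRels (γ : Fin 4 → Matrix (Fin 4) (Fin 4) ℂ) : Prop :=
  ∀ a b, γ a * γ b + γ b * γ a = (2 * (minkEta a b : ℂ)) • (1 : Matrix (Fin 4) (Fin 4) ℂ)

/-- The Weyl (chiral) gamma matrices. -/
def weylGamma : Fin 4 → Matrix (Fin 4) (Fin 4) ℂ :=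
  ![!![0, 0, 1, 0; 0, 0, 0, 1; 1, 0, 0, 0; 0, 1, 0, 0],
    !![0, 0, 0, -1; 0, 0, -1, 0; 0, 1, 0, 0; 1, 0, 0, 0],
    !![0, 0, 0, Complex.I; 0, 0, -Complex.I, 0; 0, -Complex.I, 0, 0; Complex.I, 0, 0, 0],
    !![0, 0, -1, 0; 0, 0, 0, 1; 1, 0, 0, 0; 0, -1, 0, 0]]


/-!
For a Clifford family `γ` and `A ⊆ {0,1,2,3}` let `γ_A` be the ordered product of the `γ_j`,
`j ∈ A`. Then `γ_b γ_A = σ(b, A) γ_{A ∆ {b}}` with a nonzero sign `σ` that is computed from the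
relations alone, and `tr γ_A = 0` for `A ≠ ∅`, because some `γ_k` anticommutes with `γ_A`. Peeling
off one generator at a time, these two facts make the sixteen `γ_A` linearly independent, so they
span `M₄(ℂ)`: every Clifford family generates the full matrix algebra.

Given two families `γ`, `δ`, Pauli's average `L = ∑_A γ_A F δ_A⁻¹` satisfies `γ_b L = L δ_b`, since
left multiplication by `γ_b` and right multiplication by `δ_b⁻¹` permute the terms with the same
signs. Taking `F = E_{p0}` and summing the `(p, 0)` entries over `p` gives
`∑_A tr γ_A (δ_A⁻¹)₀₀ = tr 1 = 4`, so `L ≠ 0` for some `F`.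
Schur's lemma for the full matrix algebra then makes `L` invertible and unique up to a scalar.
-/

open scoped symmDiff

lemma Finset.exists_odd_card_erase {α : Type*} [Fintype α] [DecidableEq α]
    (hα : Even (Fintype.card α)) {A : Finset α} (hA : A.Nonempty) :
    ∃ k, Odd (A.erase k).card := by
  rcases Nat.even_or_odd A.card with hev | hodd
  · obtain ⟨k, hk⟩ := hA
    refine ⟨k, ?_⟩
    rw [Finset.card_erase_of_mem hk]
    exact Nat.Even.sub_odd (Finset.card_pos.2 ⟨k, hk⟩) hev odd_one
  · obtain ⟨k, hk⟩ : ∃ k, k ∉ A := by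
      by_contra! hall
      rw [Finset.eq_univ_of_forall hall, Finset.card_univ] at hodd
      exact Nat.not_even_iff_odd.2 hodd hα
    exact ⟨k, by rwa [Finset.erase_eq_of_notMem hk]⟩

lemma Fintype.sum_symmDiff_right {α M : Type*} [GeneralizedBooleanAlgebra α] [Fintype α]
    [AddCommMonoid M] (a : α) (f : α → M) : ∑ x, f (x ∆ a) = ∑ x, f x :=
  Fintype.sum_bijective _ (symmDiff_left_involutive a).bijective _ _ fun _ => rfl

lemma Matrix.sum_mul_single_mul_apply {n α : Type*} [Fintype n] [DecidableEq n] [CommSemiring α]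
    (A B : Matrix n n α) (q j : n) :
    ∑ p, (A * Matrix.single p q 1 * B : Matrix n n α) p j = A.trace * B q j := by
  simp [Matrix.mul_apply, Matrix.single, Matrix.trace, Finset.sum_mul, ite_and]

section Schur

variable {ι n K : Type*} [Fintype n] [DecidableEq n] [Field K] {δ : ι → Matrix n n K}

lemma Matrix.exists_eq_smul_one_of_commute (hδ : Algebra.adjoin K (Set.range δ) = ⊤)
    {X : Matrix n n K} (hX : ∀ i, Commute (δ i) X) : ∃ c : K, X = c • 1 := by
  have hcomm : ∀ M : Matrix n n K, Commute M X := by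
    intro M
    have hle : Algebra.adjoin K (Set.range δ) ≤ Subalgebra.centralizer K {X} :=
      Algebra.adjoin_le (Set.range_subset_iff.2 fun i =>
        (Subalgebra.mem_centralizer_iff K).2 fun _ hg => (Set.mem_singleton_iff.1 hg) ▸ (hX i).symm)
    exact ((Subalgebra.mem_centralizer_iff K).1 (hle (hδ ▸ Algebra.mem_top)) X rfl).symm
  obtain ⟨c, hc⟩ := mem_range_scalar_of_commute_single fun i j _ => hcomm (single i j 1)
  exact ⟨c, by rw [← hc, scalar_apply, smul_one_eq_diagonal]⟩

lemma Matrix.isUnit_of_intertwines (hδ : Algebra.adjoin K (Set.range δ) = ⊤)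
    {γ : ι → Matrix n n K} {L : Matrix n n K} (hL : ∀ i, L * δ i = γ i * L) (hL0 : L ≠ 0) :
    IsUnit L := by
  have hshift : ∀ M : Matrix n n K, ∃ N, L * M = N * L := by
    intro M
    have hM : M ∈ Algebra.adjoin K (Set.range δ) := hδ ▸ Algebra.mem_top
    induction hM using Algebra.adjoin_induction with
    | mem x hx => obtain ⟨i, rfl⟩ := hx; exact ⟨γ i, hL i⟩
    | algebraMap c => exact ⟨algebraMap K _ c, (Algebra.commutes c L).symm⟩
    | add x y _ _ hx hy =>
      obtain ⟨N₁, h₁⟩ := hx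
      obtain ⟨N₂, h₂⟩ := hy
      exact ⟨N₁ + N₂, by rw [mul_add, h₁, h₂, add_mul]⟩
    | mul x y _ _ hx hy =>
      obtain ⟨N₁, h₁⟩ := hx
      obtain ⟨N₂, h₂⟩ := hy
      exact ⟨N₁ * N₂, by rw [← mul_assoc, h₁, mul_assoc, h₂, mul_assoc]⟩
  by_contra hunit
  rw [isUnit_iff_isUnit_det, isUnit_iff_ne_zero, not_not] at hunit
  obtain ⟨v, hv, hLv⟩ := exists_mulVec_eq_zero_iff.2 hunit
  obtain ⟨j, hj⟩ := Function.ne_iff.1 hv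
  refine hL0 (Matrix.ext fun i k => ?_)
  obtain ⟨N, hN⟩ := hshift (single k j (v j)⁻¹)
  have hcol : L *ᵥ (single k j (v j)⁻¹ *ᵥ v) = 0 := by
    rw [mulVec_mulVec, hN, ← mulVec_mulVec, hLv, mulVec_zero]
  rw [single_mulVec_eq, inv_mul_cancel₀ hj, one_smul, mulVec_single_one] at hcol
  exact congrFun hcol i

lemma Matrix.exists_eq_smul_of_conj_eq [Nonempty n] (hδ : Algebra.adjoin K (Set.range δ) = ⊤)
    {A B : Matrix n n K} (hA : IsUnit A) (hB : IsUnit B)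
    (h : ∀ i, A * δ i * A⁻¹ = B * δ i * B⁻¹) : ∃ c : K, c ≠ 0 ∧ A = c • B := by
  have hA' := (isUnit_iff_isUnit_det A).1 hA
  have hB' := (isUnit_iff_isUnit_det B).1 hB
  have hX : ∀ i, Commute (δ i) (B⁻¹ * A) := fun i =>
    calc δ i * (B⁻¹ * A) = B⁻¹ * (B * δ i * B⁻¹) * A := by
          simp only [mul_assoc, nonsing_inv_mul_cancel_left _ _ hB']
      _ = B⁻¹ * (A * δ i * A⁻¹) * A := by rw [h]
      _ = B⁻¹ * A * δ i := by simp only [mul_assoc, nonsing_inv_mul _ hA', mul_one]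
  obtain ⟨c, hc⟩ := exists_eq_smul_one_of_commute hδ hX
  have hAB : A = c • B := by
    rw [← mul_nonsing_inv_cancel_left _ A hB', hc, mul_smul_comm, mul_one]
  refine ⟨c, fun hc0 => ?_, hAB⟩
  rw [hAB, hc0, zero_smul] at hA
  exact not_isUnit_zero hA

end Schur

lemma minkEta_self_ne_zero (i : Fin 4) : minkEta i i ≠ 0 := by
  simp only [minkEta]; split_ifs <;> norm_num

def cliffordFactor (γ : Fin 4 → Matrix (Fin 4) (Fin 4) ℂ) (A : Finset (Fin 4)) (j : Fin 4) :
    Matrix (Fin 4) (Fin 4) ℂ :=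
  if j ∈ A then γ j else 1

def cliffordWord (γ : Fin 4 → Matrix (Fin 4) (Fin 4) ℂ) (A : Finset (Fin 4)) :
    Matrix (Fin 4) (Fin 4) ℂ :=
  cliffordFactor γ A 0 * (cliffordFactor γ A 1 * (cliffordFactor γ A 2 * cliffordFactor γ A 3))

/-- `γ_b` anticommutes past the factors `γ_j`, `j < b`, of `γ_A`, and then squares to `η_bb`
if `b ∈ A`. -/
def cliffordSign (b : Fin 4) (A : Finset (Fin 4)) : ℂ :=
  (∏ j, if j ∈ A ∧ j < b then -1 else 1) * if b ∈ A then (minkEta b b : ℂ) else 1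

lemma cliffordSign_ne_zero (b : Fin 4) (A : Finset (Fin 4)) : cliffordSign b A ≠ 0 := by
  refine mul_ne_zero (Finset.prod_ne_zero_iff.mpr fun j _ => ?_) ?_ <;>
    split_ifs <;> simp [minkEta_self_ne_zero]

lemma cliffordWord_empty (γ : Fin 4 → Matrix (Fin 4) (Fin 4) ℂ) : cliffordWord γ ∅ = 1 := by
  simp [cliffordWord, cliffordFactor]

lemma cliffordFactor_symmDiff_of_ne (γ : Fin 4 → Matrix (Fin 4) (Fin 4) ℂ) (A : Finset (Fin 4))
    {b j : Fin 4} (hj : j ≠ b) : cliffordFactor γ (A ∆ {b}) j = cliffordFactor γ A j := by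
  simp [cliffordFactor, Finset.mem_symmDiff, hj]

namespace CliffordRels

variable {γ : Fin 4 → Matrix (Fin 4) (Fin 4) ℂ}

lemma mul_self (h : CliffordRels γ) (i : Fin 4) : γ i * γ i = (minkEta i i : ℂ) • 1 := by
  have h2 : (2 : ℂ) • (γ i * γ i) = (2 : ℂ) • ((minkEta i i : ℂ) • 1) := by
    rw [two_smul, h i i, smul_smul]
  exact smul_right_injective _ two_ne_zero h2

lemma anticomm (h : CliffordRels γ) {i j : Fin 4} (hij : i ≠ j) : γ i * γ j = -(γ j * γ i) := by
  refine eq_neg_of_add_eq_zero_left ?_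
  simp [h i j, minkEta, hij]

lemma isUnit_det (h : CliffordRels γ) (i : Fin 4) : IsUnit (γ i).det :=
  isUnit_det_of_right_inverse (B := (minkEta i i : ℂ)⁻¹ • γ i) <| by
    rw [mul_smul_comm, h.mul_self, smul_smul,
      inv_mul_cancel₀ (Complex.ofReal_ne_zero.2 (minkEta_self_ne_zero i)), one_smul]

lemma isUnit_det_cliffordWord (h : CliffordRels γ) (A : Finset (Fin 4)) :
    IsUnit (cliffordWord γ A).det := by
  have hfac : ∀ j, IsUnit (cliffordFactor γ A j).det := fun j => by
    unfold cliffordFactor; split_ifs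
    exacts [h.isUnit_det j, by simp]
  simp only [cliffordWord, det_mul]
  exact (hfac 0).mul ((hfac 1).mul ((hfac 2).mul (hfac 3)))

lemma mul_cliffordFactor (h : CliffordRels γ) (A : Finset (Fin 4)) (k j : Fin 4) :
    γ k * cliffordFactor γ A j =
      (if j ∈ A ∧ j ≠ k then -1 else 1 : ℂ) • (cliffordFactor γ A j * γ k) := by
  unfold cliffordFactor
  by_cases hj : j ∈ A
  · by_cases hjk : j = k
    · simp [hjk]
    · simp [hj, hjk, h.anticomm (Ne.symm hjk)]
  · simp [hj]

lemma mul_cliffordFactor_self (h : CliffordRels γ) (A : Finset (Fin 4)) (b : Fin 4) :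
    γ b * cliffordFactor γ A b =
      (if b ∈ A then (minkEta b b : ℂ) else 1) • cliffordFactor γ (A ∆ {b}) b := by
  by_cases hb : b ∈ A <;> simp [cliffordFactor, hb, Finset.mem_symmDiff, h.mul_self]

lemma mul_cliffordWord (h : CliffordRels γ) (b : Fin 4) (A : Finset (Fin 4)) :
    γ b * cliffordWord γ A = cliffordSign b A • cliffordWord γ (A ∆ {b}) := by
  have hpass : ∀ {j : Fin 4}, j ≠ b → ∀ X, γ b * (cliffordFactor γ A j * X) =
      (if j ∈ A then -1 else 1 : ℂ) • (cliffordFactor γ A j * (γ b * X)) := fun hjb X => by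
    rw [← mul_assoc, h.mul_cliffordFactor, smul_mul_assoc, mul_assoc]
    simp [hjb]
  have hhit : ∀ X, γ b * (cliffordFactor γ A b * X) =
      (if b ∈ A then (minkEta b b : ℂ) else 1) • (cliffordFactor γ (A ∆ {b}) b * X) :=
    fun X => by rw [← mul_assoc, h.mul_cliffordFactor_self, smul_mul_assoc]
  fin_cases b <;> simp only [Fin.reduceFinMk, Fin.zero_eta, Fin.mk_one] at hpass hhit ⊢ <;>
  simp only [cliffordWord, hpass, hhit, h.mul_cliffordFactor_self, ne_eq, Fin.reduceEq,
    not_false_eq_true, mul_smul_comm, smul_smul] <;>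
  simp [cliffordSign, Fin.prod_univ_four, cliffordFactor_symmDiff_of_ne]

lemma mul_cliffordWord_eq_smul_mul (h : CliffordRels γ) (A : Finset (Fin 4)) (k : Fin 4) :
    γ k * cliffordWord γ A = (-1 : ℂ) ^ (A.erase k).card • (cliffordWord γ A * γ k) := by
  have hsign : (-1 : ℂ) ^ (A.erase k).card = ∏ j, (if j ∈ A ∧ j ≠ k then -1 else 1 : ℂ) := by
    rw [← Finset.prod_const, ← Finset.univ_inter (A.erase k), ← Finset.prod_ite_mem]
    simp [Finset.mem_erase, and_comm]
  have hpass : ∀ j X, γ k * (cliffordFactor γ A j * X) =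
      (if j ∈ A ∧ j ≠ k then -1 else 1 : ℂ) • (cliffordFactor γ A j * (γ k * X)) := fun j X => by
    rw [← mul_assoc, h.mul_cliffordFactor, smul_mul_assoc, mul_assoc]
  rw [hsign, Fin.prod_univ_four]
  simp only [cliffordWord, hpass, h.mul_cliffordFactor, mul_smul_comm, smul_smul, mul_assoc]

lemma trace_cliffordWord_eq_zero (h : CliffordRels γ) {A : Finset (Fin 4)} (hA : A.Nonempty) :
    (cliffordWord γ A).trace = 0 := by
  obtain ⟨k, hk⟩ := Finset.exists_odd_card_erase (by decide) hA
  have hη : (minkEta k k : ℂ) ≠ 0 := Complex.ofReal_ne_zero.2 (minkEta_self_ne_zero k)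
  have hconj : γ k * cliffordWord γ A * γ k = -((minkEta k k : ℂ) • cliffordWord γ A) := by
    rw [h.mul_cliffordWord_eq_smul_mul, hk.neg_one_pow, neg_one_smul, neg_mul, mul_assoc,
      h.mul_self, mul_smul_comm, mul_one]
  have htr := congrArg trace hconj
  rw [trace_mul_cycle, h.mul_self, smul_mul_assoc, one_mul, trace_neg, trace_smul,
    smul_eq_mul] at htr
  exact (mul_eq_zero.1 (CharZero.eq_neg_self_iff.1 htr)).resolve_left hη

lemma linearIndependent_cliffordWord (h : CliffordRels γ) :
    LinearIndependent ℂ (cliffordWord γ) := by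
  rw [Fintype.linearIndependent_iff]
  suffices ∀ n (c : Finset (Fin 4) → ℂ), ∑ A, c A • cliffordWord γ A = 0 →
      ∀ A : Finset (Fin 4), A.card = n → c A = 0 from fun c hc A => this _ c hc A rfl
  intro n
  induction n with
  | zero =>
    intro c hc A hA
    rw [Finset.card_eq_zero] at hA
    subst hA
    have htr := congrArg trace hc
    rw [trace_sum, Finset.sum_eq_single ∅ (fun B _ hB => by
      rw [trace_smul, h.trace_cliffordWord_eq_zero (Finset.nonempty_iff_ne_empty.2 hB), smul_zero])
      (by simp)] at htr
    simpa [cliffordWord_empty] using htr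
  | succ n ih =>
    intro c hc A hA
    obtain ⟨b, hb⟩ : A.Nonempty := Finset.card_pos.1 (by omega)
    have hshift : ∑ B, (cliffordSign b (B ∆ {b}) * c (B ∆ {b})) • cliffordWord γ B = 0 :=
      calc ∑ B, (cliffordSign b (B ∆ {b}) * c (B ∆ {b})) • cliffordWord γ B
          = ∑ B, (cliffordSign b B * c B) • cliffordWord γ (B ∆ {b}) := by
            rw [← Fintype.sum_symmDiff_right {b}]
            simp only [symmDiff_symmDiff_cancel_right]
        _ = γ b * ∑ B, c B • cliffordWord γ B := by
            simp only [Finset.mul_sum, mul_smul_comm, h.mul_cliffordWord, smul_smul, mul_comm]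
        _ = 0 := by rw [hc, mul_zero]
    have hcard : (A ∆ {b}).card = n := by
      have hAb : A ∆ {b} = A.erase b := by
        ext j; by_cases hj : j = b <;> simp [Finset.mem_symmDiff, hj, hb]
      rw [hAb, Finset.card_erase_of_mem hb, hA, Nat.add_sub_cancel]
    have hcA := ih _ hshift _ hcard
    rw [symmDiff_symmDiff_cancel_right] at hcA
    exact (mul_eq_zero.1 hcA).resolve_left (cliffordSign_ne_zero b A)

lemma adjoin_range_eq_top (h : CliffordRels γ) : Algebra.adjoin ℂ (Set.range γ) = ⊤ := by
  have hspan := h.linearIndependent_cliffordWord.span_eq_top_of_card_eq_finrank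
    (by simp [Module.finrank_matrix, Fintype.card_finset])
  have hword : ∀ A, cliffordWord γ A ∈ Algebra.adjoin ℂ (Set.range γ) := fun A => by
    have hfac : ∀ j, cliffordFactor γ A j ∈ Algebra.adjoin ℂ (Set.range γ) := fun j => by
      unfold cliffordFactor; split_ifs
      exacts [Algebra.subset_adjoin ⟨j, rfl⟩, Subalgebra.one_mem _]
    exact mul_mem (hfac 0) (mul_mem (hfac 1) (mul_mem (hfac 2) (hfac 3)))
  refine eq_top_iff.2 fun M _ => ?_
  have hle : Submodule.span ℂ (Set.range (cliffordWord γ)) ≤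
      Subalgebra.toSubmodule (Algebra.adjoin ℂ (Set.range γ)) :=
    Submodule.span_le.2 (Set.range_subset_iff.2 hword)
  exact hle (hspan ▸ Submodule.mem_top)

lemma inv_cliffordWord_symmDiff_mul (h : CliffordRels γ) (b : Fin 4) (A : Finset (Fin 4)) :
    (cliffordWord γ (A ∆ {b}))⁻¹ * γ b = cliffordSign b A • (cliffordWord γ A)⁻¹ := by
  have hW := h.isUnit_det_cliffordWord A
  have hW' := h.isUnit_det_cliffordWord (A ∆ {b})
  calc (cliffordWord γ (A ∆ {b}))⁻¹ * γ b
      = (cliffordWord γ (A ∆ {b}))⁻¹ * (γ b * cliffordWord γ A) * (cliffordWord γ A)⁻¹ := by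
        rw [mul_assoc, mul_nonsing_inv_cancel_right _ _ hW]
    _ = cliffordSign b A • (cliffordWord γ A)⁻¹ := by
        rw [h.mul_cliffordWord, mul_smul_comm, nonsing_inv_mul _ hW', smul_mul_assoc, one_mul]

end CliffordRels

def cliffordIntertwiner (γ δ : Fin 4 → Matrix (Fin 4) (Fin 4) ℂ) (F : Matrix (Fin 4) (Fin 4) ℂ) :
    Matrix (Fin 4) (Fin 4) ℂ :=
  ∑ A, cliffordWord γ A * F * (cliffordWord δ A)⁻¹

namespace CliffordRels

variable {γ δ : Fin 4 → Matrix (Fin 4) (Fin 4) ℂ}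

lemma mul_cliffordIntertwiner (hγ : CliffordRels γ) (hδ : CliffordRels δ) (b : Fin 4)
    (F : Matrix (Fin 4) (Fin 4) ℂ) :
    γ b * cliffordIntertwiner γ δ F = cliffordIntertwiner γ δ F * δ b := by
  unfold cliffordIntertwiner
  rw [Finset.mul_sum, Finset.sum_mul]
  conv_rhs => rw [← Fintype.sum_symmDiff_right {b}]
  refine Finset.sum_congr rfl fun A _ => ?_
  rw [mul_assoc _ _ (δ b), hδ.inv_cliffordWord_symmDiff_mul, ← mul_assoc, ← mul_assoc,
    hγ.mul_cliffordWord, mul_smul_comm, smul_mul_assoc, smul_mul_assoc]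

lemma exists_cliffordIntertwiner_ne_zero (hγ : CliffordRels γ)
    (δ : Fin 4 → Matrix (Fin 4) (Fin 4) ℂ) : ∃ F, cliffordIntertwiner γ δ F ≠ 0 := by
  by_contra! hzero
  have hcontract : ∑ p, cliffordIntertwiner γ δ (single p 0 1) p 0 = 4 := by
    simp only [cliffordIntertwiner, Matrix.sum_apply]
    rw [Finset.sum_comm]
    simp only [sum_mul_single_mul_apply]
    rw [Finset.sum_eq_single ∅ (fun B _ hB => by
      rw [hγ.trace_cliffordWord_eq_zero (Finset.nonempty_iff_ne_empty.2 hB), zero_mul]) (by simp)]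
    simp [cliffordWord_empty]
  simp [hzero] at hcontract

lemma exists_isUnit_conj (hγ : CliffordRels γ) (hδ : CliffordRels δ) :
    ∃ L, IsUnit L ∧ ∀ a, γ a = L * δ a * L⁻¹ := by
  obtain ⟨F, hF⟩ := hγ.exists_cliffordIntertwiner_ne_zero δ
  have hint : ∀ a, cliffordIntertwiner γ δ F * δ a = γ a * cliffordIntertwiner γ δ F :=
    fun a => (hγ.mul_cliffordIntertwiner hδ a F).symm
  have hL := isUnit_of_intertwines hδ.adjoin_range_eq_top hint hF
  refine ⟨_, hL, fun a => ?_⟩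
  rw [hint, mul_nonsing_inv_cancel_right _ _ ((isUnit_iff_isUnit_det _).1 hL)]

end CliffordRels

lemma cliffordRels_weylGamma : CliffordRels weylGamma := by
  intro a b
  fin_cases a <;> fin_cases b <;> simp [weylGamma, minkEta, ← Matrix.ext_iff, Fin.forall_fin_succ] <;>
    norm_num

/-- **Fundamental theorem (Pauli's theorem).** Every family of complex 4×4 matrices
satisfying the Clifford relations is conjugate to the Weyl gamma matrices by an invertible
matrix `L`, and `L` is unique up to a non-zero complex factor. -/
theorem fundamental_theorem_dirac_matrices
    (γ' : Fin 4 → Matrix (Fin 4) (Fin 4) ℂ) (hγ' : CliffordRels γ') :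
    ∃ L : Matrix (Fin 4) (Fin 4) ℂ, IsUnit L ∧
      (∀ a, γ' a = L * weylGamma a * L⁻¹) ∧
      (∀ K : Matrix (Fin 4) (Fin 4) ℂ, IsUnit K →
        (∀ a, γ' a = K * weylGamma a * K⁻¹) → ∃ c : ℂ, c ≠ 0 ∧ K = c • L) := by
  obtain ⟨L, hL, hconj⟩ := hγ'.exists_isUnit_conj cliffordRels_weylGamma
  refine ⟨L, hL, hconj, fun K hK hKconj => ?_⟩
  exact exists_eq_smul_of_conj_eq cliffordRels_weylGamma.adjoin_range_eq_top hK hL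
    fun a => (hKconj a).symm.trans (hconj a)

end
end

section
/- Let γ_0,γ_1,γ_2,γ_3 be complex 4×4 matrices satisfying the Clifford relations. For every real 4×4 matrix Λ with Λᵀ η Λ = η (i.e. every Lorentz transformation) there exist finitely many vectors u₁,…,u_k ∈ ℝ⁴ with slash(u_i)² = I or slash(u_i)² = −I for each i, such that the (invertible) matrix S := slash(u₁)···slash(u_k) satisfies S γ_b S⁻¹ = Σ_{a=0}^{3} Λ_{ab} γ_a for all b ∈ {0,1,2,3}. -/
open Matrix

noncomputable section

/-- The Minkowski metric as a real 4×4 matrix. -/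
def minkEtaMatrix : Matrix (Fin 4) (Fin 4) ℝ := Matrix.of minkEta

/-- `slash γ v = Σ_a v_a γ_a` for a real vector `v`. -/
def slash (γ : Fin 4 → Matrix (Fin 4) (Fin 4) ℂ) (v : Fin 4 → ℝ) :
    Matrix (Fin 4) (Fin 4) ℂ :=
  ∑ a, (v a : ℂ) • γ a

/-!
A Lorentz transformation is a product of reflections in non-null vectors (Cartan–Dieudonné):
working through an orthogonal basis, the image `w = Λ v` of a basis vector is sent back to `v`
by the reflection in `w - v`, or, if `w - v` is null, by the reflections in `w + v` and `v`
(the two cannot both be null since `Q (w - v) + Q (w + v) = 4 Q v`).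

The Clifford relations say that conjugation by `slash u` acts on `slash x` as minus the
reflection in `u`. Rescaling `u` to `Q u = ±1` makes `slash u ^ 2 = ±1`, and the sign is
removed by `-1`, the product of the four negated coordinate reflections.
-/

namespace LinearMap.BilinForm

section Field

variable {K V : Type*} [Field K] [AddCommGroup V] [Module K V] {B : LinearMap.BilinForm K V}

variable (B) in
def reflection (u : V) : Module.End K V :=
  LinearMap.id - (2 / B u u) • (B u).smulRight u

@[simp]
lemma reflection_apply (u x : V) : B.reflection u x = x - (2 * B u x / B u u) • u := by
  simp [reflection, smul_smul, mul_div_right_comm]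

lemma reflection_apply_of_eq_zero {u x : V} (h : B u x = 0) : B.reflection u x = x := by
  simp [h]

lemma reflection_apply_self {u : V} (hu : B u u ≠ 0) : B.reflection u u = -u := by
  rw [reflection_apply, mul_div_cancel_right₀ _ hu, two_smul, sub_add_cancel_left]

lemma reflection_smul {c : K} (hc : c ≠ 0) (u : V) : B.reflection (c • u) = B.reflection u := by
  ext x
  by_cases hu : B u u = 0
  · simp [hu]
  · simp only [reflection_apply, map_smul, LinearMap.smul_apply, smul_eq_mul, smul_smul]
    congr 2
    field_simp

lemma reflection_mul_self (u : V) : B.reflection u * B.reflection u = 1 := by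
  ext x
  by_cases hu : B u u = 0
  · simp [hu]
  · rw [Module.End.mul_apply, Module.End.one_apply, reflection_apply u x, map_sub, map_smul,
      reflection_apply_self hu, reflection_apply, smul_neg, sub_neg_eq_add, sub_add_cancel]

lemma isOrthogonal_reflection (hB : B.IsSymm) (u : V) : B.IsOrthogonal (B.reflection u) := by
  intro x y
  by_cases hu : B u u = 0
  · simp [hu]
  · simp only [reflection_apply, map_sub, map_smul, LinearMap.sub_apply, LinearMap.smul_apply,
      smul_eq_mul, hB.eq x u]
    field_simp
    ring

lemma reflection_sub_apply (hB : B.IsSymm) {v w : V} (hvw : B w w = B v v)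
    (h : B (w - v) (w - v) ≠ 0) : B.reflection (w - v) w = v := by
  have hQ : B (w - v) (w - v) = 2 * B (w - v) w := by
    simp only [map_sub, LinearMap.sub_apply, hvw, hB.eq w v]
    ring
  rw [reflection_apply, hQ, div_self (hQ ▸ h), one_smul, sub_sub_cancel]

lemma isOrthogonal_list_prod_reflection (hB : B.IsSymm) (l : List V) :
    B.IsOrthogonal (l.map B.reflection).prod := by
  induction l with
  | nil => exact fun _ _ => rfl
  | cons u l ih =>
    intro x y
    rw [List.map_cons, List.prod_cons, Module.End.mul_apply, Module.End.mul_apply,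
      isOrthogonal_reflection hB u, ih]

lemma list_prod_reflection_apply_of_eq_zero {l : List V} {x : V} (h : ∀ u ∈ l, B u x = 0) :
    (l.map B.reflection).prod x = x := by
  induction l with
  | nil => rfl
  | cons u l ih =>
    rw [List.forall_mem_cons] at h
    rw [List.map_cons, List.prod_cons, Module.End.mul_apply, ih h.2,
      reflection_apply_of_eq_zero h.1]

lemma list_prod_reflection_reverse_mul (l : List V) :
    (l.reverse.map B.reflection).prod * (l.map B.reflection).prod = 1 := by
  induction l with
  | nil => simp
  | cons u l ih =>
    rw [List.reverse_cons, List.map_append, List.map_singleton, List.prod_append,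
      List.prod_singleton, List.map_cons, List.prod_cons, mul_assoc, ← mul_assoc (B.reflection u),
      reflection_mul_self, one_mul, ih]

lemma exists_list_prod_reflection_apply_eq [NeZero (2 : K)] (hB : B.IsSymm) {v w : V}
    (hvw : B w w = B v v) (hv : B v v ≠ 0) :
    ∃ l : List V, (∀ u ∈ l, B u u ≠ 0 ∧ ∀ x, B v x = 0 → B w x = 0 → B u x = 0) ∧
      (l.map B.reflection).prod w = v := by
  by_cases hsub : B (w - v) (w - v) = 0
  · have hadd : B (w + v) (w + v) ≠ 0 := by
      have hsum : B (w - v) (w - v) + B (w + v) (w + v) = 2 * (2 * B v v) := by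
        simp only [map_add, map_sub, LinearMap.add_apply, LinearMap.sub_apply, hvw, hB.eq w v]
        ring
      rw [hsub, zero_add] at hsum
      exact hsum ▸ mul_ne_zero two_ne_zero (mul_ne_zero two_ne_zero hv)
    have hw : B.reflection (w + v) w = -v := by
      rw [← sub_neg_eq_add] at hadd ⊢
      exact reflection_sub_apply hB (by simpa using hvw) hadd
    refine ⟨[v, w + v], ?_, ?_⟩
    · intro u hu
      simp only [List.mem_cons, List.not_mem_nil, or_false] at hu
      rcases hu with rfl | rfl
      · exact ⟨hv, fun x hvx _ => hvx⟩
      · exact ⟨hadd, fun x hvx hwx => by simp [hvx, hwx]⟩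
    · simp only [List.map_cons, List.map_nil, List.prod_cons, List.prod_nil, mul_one,
        Module.End.mul_apply, hw, map_neg, reflection_apply_self hv, neg_neg]
  · refine ⟨[w - v], ?_, ?_⟩
    · simp only [List.mem_singleton, forall_eq]
      exact ⟨hsub, fun x hvx hwx => by simp [hvx, hwx]⟩
    · simpa using reflection_sub_apply hB hvw hsub

theorem exists_eq_list_prod_reflection_of_apply_basis_eq [NeZero (2 : K)] {ι : Type*}
    (hB : B.IsSymm) {b : Module.Basis ι K V} (hb : B.IsOrthoᵢ b) (hbb : ∀ i, B (b i) (b i) ≠ 0)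
    (s : Finset ι) {σ : Module.End K V} (hσ : B.IsOrthogonal σ)
    (hσb : ∀ i ∉ s, σ (b i) = b i) :
    ∃ l : List V, (∀ u ∈ l, B u u ≠ 0) ∧ σ = (l.map B.reflection).prod := by
  classical
  induction s using Finset.induction_on generalizing σ with
  | empty => exact ⟨[], by simp, b.ext fun i => hσb i (Finset.notMem_empty i)⟩
  | insert j t hj ih =>
    obtain ⟨l, hl, hlσ⟩ := exists_list_prod_reflection_apply_eq hB (hσ (b j) (b j)) (hbb j)
    have hρ : ∀ i ∉ insert j t, (l.map B.reflection).prod (b i) = b i := by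
      intro i hi
      have hji : j ≠ i := fun h => hi (h ▸ Finset.mem_insert_self j t)
      refine list_prod_reflection_apply_of_eq_zero fun u hu => (hl u hu).2 _ (hb hji) ?_
      rw [← hσb i hi, hσ, hb hji]
    obtain ⟨l', hl', hρσ⟩ := ih (σ := (l.map B.reflection).prod * σ)
      (fun x y => (isOrthogonal_list_prod_reflection hB l _ _).trans (hσ x y)) fun i hi => by
        by_cases hij : i = j
        · rw [hij, Module.End.mul_apply, hlσ]
        · have hi' : i ∉ insert j t := by simp [hij, hi]
          rw [Module.End.mul_apply, hσb i hi', hρ i hi']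
    refine ⟨l.reverse ++ l', fun u hu => ?_, ?_⟩
    · rcases List.mem_append.mp hu with hu | hu
      exacts [(hl u (List.mem_reverse.mp hu)).1, hl' u hu]
    · rw [List.map_append, List.prod_append, ← hρσ, ← mul_assoc,
        list_prod_reflection_reverse_mul, one_mul]

theorem exists_eq_list_prod_reflection [Invertible (2 : K)] [FiniteDimensional K V]
    (hB : B.IsSymm) (hB' : B.Nondegenerate) {σ : Module.End K V} (hσ : B.IsOrthogonal σ) :
    ∃ l : List V, (∀ u ∈ l, B u u ≠ 0) ∧ σ = (l.map B.reflection).prod := by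
  obtain ⟨b, hb⟩ := exists_orthogonal_basis (isSymm_iff.mp hB)
  exact exists_eq_list_prod_reflection_of_apply_basis_eq hB hb
    (iIsOrtho.not_isOrtho_basis_self_of_nondegenerate hb hB') Finset.univ hσ (by simp)

end Field

lemma exists_self_eq_one_or_neg_one_and_reflection_eq {E : Type*} [AddCommGroup E] [Module ℝ E]
    {B : LinearMap.BilinForm ℝ E} {u : E} (hu : B u u ≠ 0) :
    ∃ u' : E, (B u' u' = 1 ∨ B u' u' = -1) ∧ B.reflection u' = B.reflection u := by
  have habs : 0 < |B u u| := abs_pos.mpr hu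
  refine ⟨(√|B u u|)⁻¹ • u, ?_, reflection_smul (inv_ne_zero (Real.sqrt_ne_zero'.mpr habs)) u⟩
  have hQ : B ((√|B u u|)⁻¹ • u) ((√|B u u|)⁻¹ • u) = B u u / |B u u| := by
    simp only [map_smul, LinearMap.smul_apply, smul_eq_mul]
    rw [← mul_assoc, ← mul_inv, Real.mul_self_sqrt habs.le, inv_mul_eq_div]
  rcases lt_or_gt_of_ne hu with hneg | hpos
  · right; rw [hQ, abs_of_neg hneg, div_neg, div_self hu]
  · left; rw [hQ, abs_of_pos hpos, div_self hu]

end LinearMap.BilinForm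

lemma Matrix.isOrthogonal_toLin'_of_transpose_mul_mul_eq {R n : Type*} [CommRing R] [Fintype n]
    [DecidableEq n] {η Λ : Matrix n n R} (h : Λᵀ * η * Λ = η) :
    η.toBilin'.IsOrthogonal Λ.toLin' := fun x y => by
  rw [← LinearMap.BilinForm.comp_apply, Matrix.toBilin'_comp, h]

lemma minkEtaMatrix_eq_diagonal : minkEtaMatrix = diagonal ![1, -1, -1, -1] := by
  ext a b
  fin_cases a <;> fin_cases b <;> rfl

abbrev minkowskiForm : LinearMap.BilinForm ℝ (Fin 4 → ℝ) := minkEtaMatrix.toBilin'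

lemma isSymm_minkowskiForm : minkowskiForm.IsSymm :=
  Matrix.isSymm_toBilin'_iff_isSymm.mpr (minkEtaMatrix_eq_diagonal ▸ isSymm_diagonal _)

lemma nondegenerate_minkowskiForm : minkowskiForm.Nondegenerate :=
  LinearMap.BilinForm.nondegenerate_toBilin'_of_det_ne_zero' _ <| by
    simp [minkEtaMatrix_eq_diagonal, Fin.prod_univ_four]

section Clifford

variable {γ : Fin 4 → Matrix (Fin 4) (Fin 4) ℂ}

lemma slash_sub (x y : Fin 4 → ℝ) : slash γ (x - y) = slash γ x - slash γ y := by
  simp [slash, sub_smul, Finset.sum_sub_distrib]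

lemma slash_neg (x : Fin 4 → ℝ) : slash γ (-x) = -slash γ x := by
  simp [slash, neg_smul, Finset.sum_neg_distrib]

lemma slash_smul (c : ℝ) (x : Fin 4 → ℝ) : slash γ (c • x) = (c : ℂ) • slash γ x := by
  simp only [slash, Pi.smul_apply, smul_eq_mul, Complex.ofReal_mul, mul_smul, Finset.smul_sum]

lemma slash_single (b : Fin 4) : slash γ (Pi.single b 1) = γ b := by
  simp [slash, Pi.single_apply]

lemma slash_toLin'_single (Λ : Matrix (Fin 4) (Fin 4) ℝ) (b : Fin 4) :
    slash γ (Λ.toLin' (Pi.single b 1)) = ∑ a, (Λ a b : ℂ) • γ a := by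
  simp [slash]

lemma slash_mul_add_mul_slash (hγ : CliffordRels γ) (x y : Fin 4 → ℝ) :
    slash γ x * slash γ y + slash γ y * slash γ x =
      (2 * minkowskiForm x y : ℂ) • 1 := by
  simp only [slash, Finset.sum_mul_sum, smul_mul_smul_comm]
  conv_lhs => arg 2; rw [Finset.sum_comm]
  simp only [← Finset.sum_add_distrib, mul_comm ((y _ : ℝ) : ℂ), ← smul_add, hγ _ _, smul_smul, ← Finset.sum_smul,
    Matrix.toBilin'_apply, minkEtaMatrix, Matrix.of_apply]
  push_cast
  simp only [Finset.mul_sum]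
  congr! 3
  ring

lemma slash_sq (hγ : CliffordRels γ) (x : Fin 4 → ℝ) :
    slash γ x ^ 2 = (minkowskiForm x x : ℂ) • 1 := by
  have h := slash_mul_add_mul_slash hγ x x
  rw [← sq, ← two_smul ℂ, mul_smul] at h
  exact smul_right_injective _ two_ne_zero h

/-- `S` implements `f` if `S * slash x * S⁻¹ = slash (f x)`, stated without the inverse. -/
def Implements (γ : Fin 4 → Matrix (Fin 4) (Fin 4) ℂ) (S : Matrix (Fin 4) (Fin 4) ℂ)
    (f : Module.End ℝ (Fin 4 → ℝ)) : Prop :=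
  ∀ x, S * slash γ x = slash γ (f x) * S

lemma Implements.mul {S T : Matrix (Fin 4) (Fin 4) ℂ} {f g : Module.End ℝ (Fin 4 → ℝ)}
    (hS : Implements γ S f) (hT : Implements γ T g) : Implements γ (S * T) (f * g) := fun x => by
  rw [mul_assoc, hT, ← mul_assoc, hS, mul_assoc, Module.End.mul_apply]

lemma implements_slash (hγ : CliffordRels γ) {u : Fin 4 → ℝ}
    (hu : minkowskiForm u u ≠ 0) :
    Implements γ (slash γ u) (-minkowskiForm.reflection u) := fun x => by
  rw [LinearMap.neg_apply, LinearMap.BilinForm.reflection_apply, slash_neg, slash_sub, slash_smul,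
    neg_sub, sub_mul, smul_mul_assoc, ← sq, slash_sq hγ, smul_smul,
    eq_sub_of_add_eq (slash_mul_add_mul_slash hγ u x)]
  congr 2
  push_cast
  rw [div_mul_cancel₀ _ (Complex.ofReal_ne_zero.mpr hu)]

end Clifford

def implementedSubmonoid (γ : Fin 4 → Matrix (Fin 4) (Fin 4) ℂ) :
    Submonoid (Module.End ℝ (Fin 4 → ℝ)) where
  carrier := {f | ∃ l : List (Fin 4 → ℝ), (∀ u ∈ l, slash γ u ^ 2 = 1 ∨ slash γ u ^ 2 = -1) ∧
    Implements γ (l.map (slash γ)).prod f}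
  mul_mem' := by
    rintro f g ⟨l₁, hl₁, hf⟩ ⟨l₂, hl₂, hg⟩
    refine ⟨l₁ ++ l₂, List.forall_mem_append.mpr ⟨hl₁, hl₂⟩, ?_⟩
    rw [List.map_append, List.prod_append]
    exact hf.mul hg
  one_mem' := ⟨[], by simp, fun x => by simp⟩

section Implemented

variable {γ : Fin 4 → Matrix (Fin 4) (Fin 4) ℂ}

lemma neg_reflection_mem_implementedSubmonoid (hγ : CliffordRels γ) {u : Fin 4 → ℝ}
    (hu : minkowskiForm u u = 1 ∨ minkowskiForm u u = -1) :
    -minkowskiForm.reflection u ∈ implementedSubmonoid γ := by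
  refine ⟨[u], ?_, by simpa using implements_slash hγ (by rcases hu with h | h <;> simp [h])⟩
  rcases hu with h | h <;> simp [slash_sq hγ, h]

lemma neg_one_mem_implementedSubmonoid (hγ : CliffordRels γ) : -1 ∈ implementedSubmonoid γ := by
  have hprod : -minkowskiForm.reflection (Pi.single 0 1) *
      -minkowskiForm.reflection (Pi.single 1 1) *
      -minkowskiForm.reflection (Pi.single 2 1) *
      -minkowskiForm.reflection (Pi.single 3 1) = -1 := by
    ext j i
    fin_cases j <;> fin_cases i <;> simp [minkEtaMatrix, minkEta] <;> norm_num
  rw [← hprod]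
  refine mul_mem (mul_mem (mul_mem ?_ ?_) ?_) ?_ <;>
    exact neg_reflection_mem_implementedSubmonoid hγ (by simp [minkEtaMatrix, minkEta])

lemma reflection_mem_implementedSubmonoid (hγ : CliffordRels γ) {u : Fin 4 → ℝ}
    (hu : minkowskiForm u u ≠ 0) :
    minkowskiForm.reflection u ∈ implementedSubmonoid γ := by
  obtain ⟨u', hu', hR⟩ := LinearMap.BilinForm.exists_self_eq_one_or_neg_one_and_reflection_eq hu
  rw [← hR, ← mul_one (LinearMap.BilinForm.reflection _ u'), ← neg_mul_neg]
  exact mul_mem (neg_reflection_mem_implementedSubmonoid hγ hu')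
    (neg_one_mem_implementedSubmonoid hγ)

end Implemented

lemma isUnit_of_sq_eq_one_or_neg_one {R : Type*} [Ring R] {x : R} (h : x ^ 2 = 1 ∨ x ^ 2 = -1) :
    IsUnit x := by
  refine IsUnit.of_pow_eq_one (n := 2 * 2) ?_ (by norm_num)
  rcases h with h | h <;> rw [pow_mul, h] <;> simp

/-- Every Lorentz transformation `Λ` is implemented by a finite product `S` of unit
vectors of the Clifford algebra: `S γ_b S⁻¹ = Σ_a Λ_{ab} γ_a`. -/
theorem lorentz_implemented_by_product_of_reflections
    (γ : Fin 4 → Matrix (Fin 4) (Fin 4) ℂ) (hγ : CliffordRels γ)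
    (Λ : Matrix (Fin 4) (Fin 4) ℝ) (hΛ : Λᵀ * minkEtaMatrix * Λ = minkEtaMatrix) :
    ∃ l : List (Fin 4 → ℝ),
      (∀ u ∈ l, slash γ u ^ 2 = 1 ∨ slash γ u ^ 2 = -1) ∧
      IsUnit ((l.map (slash γ)).prod) ∧
      ∀ b, (l.map (slash γ)).prod * γ b * ((l.map (slash γ)).prod)⁻¹ =
        ∑ a, (Λ a b : ℂ) • γ a := by
  obtain ⟨l, hl, hΛl⟩ := LinearMap.BilinForm.exists_eq_list_prod_reflection
    isSymm_minkowskiForm nondegenerate_minkowskiForm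
    (Matrix.isOrthogonal_toLin'_of_transpose_mul_mul_eq hΛ)
  obtain ⟨l', hsq, himpl⟩ : Λ.toLin' ∈ implementedSubmonoid γ :=
    hΛl ▸ Submonoid.list_prod_mem _
      (by simpa using fun u hu => reflection_mem_implementedSubmonoid hγ (hl u hu))
  have hunit : IsUnit (l'.map (slash γ)).prod :=
    List.prod_isUnit (by simpa using fun u hu => isUnit_of_sq_eq_one_or_neg_one (hsq u hu))
  refine ⟨l', hsq, hunit, fun b => ?_⟩
  rw [← slash_single (γ := γ) b, himpl, mul_assoc,
    mul_nonsing_inv _ ((isUnit_iff_isUnit_det _).mp hunit), mul_one, slash_toLin'_single]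
end
end

section
/- Let γ_0,γ_1,γ_2,γ_3 be the Weyl gamma matrices and D the real subalgebra of the complex 4×4 matrices they generate. If S ∈ D satisfies det S = 1 and S γ_a = γ_a S for all a ∈ {0,1,2,3}, then S = I or S = −I. -/
/-!
A matrix commuting with all four gamma matrices is a scalar `c • 1`; this is a finite linear
system in the entries. To see that `c` is real when the matrix lies in `D`, use
`C = γ₀ γ₁ γ₃`: since `γ₂` is the only gamma matrix with non-real entries and the only
one anticommuting with `C`, every generator `x` of `D` satisfies `C x̄ = x C`, and this property is
closed under sums and products. For a scalar it says `c̄ = c`. Finally `det (c • 1) = c ⁴ = 1`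
forces the real number `c` to be `±1`.
-/

open Matrix

noncomputable section

/-- The Dirac algebra `D`: the real subalgebra of the complex 4×4 matrices generated by
the Weyl gamma matrices. -/
def diracSubalgebra : Subalgebra ℝ (Matrix (Fin 4) (Fin 4) ℂ) :=
  Algebra.adjoin ℝ (Set.range weylGamma)

theorem eq_smul_one_of_commute_weylGamma (S : Matrix (Fin 4) (Fin 4) ℂ)
    (h : ∀ a, S * weylGamma a = weylGamma a * S) : S = S 0 0 • 1 := by
  simp only [← Matrix.ext_iff, Fin.forall_fin_succ, weylGamma, mul_apply, Fin.sum_univ_four] at h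
  simp [mul_comm _ Complex.I, ← mul_neg, Complex.I_ne_zero] at h
  ext i j
  fin_cases i <;> fin_cases j <;> simp <;> grind

section TwistedFixed

variable {R A : Type*} [CommSemiring R] [Semiring A] [Algebra R A]

def twistedFixedSubalgebra (φ : A →ₐ[R] A) (c : A) : Subalgebra R A where
  carrier := {x | c * φ x = x * c}
  mul_mem' {x y} hx hy := by
    simp only [Set.mem_ofPred_eq, map_mul] at *
    rw [← mul_assoc, hx, mul_assoc, hy, mul_assoc]
  add_mem' {x y} hx hy := by
    simp only [Set.mem_ofPred_eq, map_add] at *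
    rw [mul_add, add_mul, hx, hy]
  algebraMap_mem' r := by
    simp only [Set.mem_ofPred_eq, AlgHom.commutes]
    exact (Algebra.commutes r c).symm

theorem mem_twistedFixedSubalgebra {φ : A →ₐ[R] A} {c x : A} :
    x ∈ twistedFixedSubalgebra φ c ↔ c * φ x = x * c :=
  Iff.rfl

end TwistedFixed

theorem conj_eq_of_smul_one_mem_twistedFixedSubalgebra {n : Type*} [Fintype n] [DecidableEq n]
    {C : Matrix n n ℂ} (hC : C ≠ 0) {c : ℂ}
    (hc : c • 1 ∈ twistedFixedSubalgebra Complex.conjAe.toAlgHom.mapMatrix C) :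
    starRingEnd ℂ c = c := by
  have hmap : Complex.conjAe.toAlgHom.mapMatrix (c • 1 : Matrix n n ℂ) = starRingEnd ℂ c • 1 := by
    ext i j
    by_cases h : i = j <;> simp [h]
  rw [mem_twistedFixedSubalgebra, hmap, Matrix.mul_smul, Matrix.smul_mul, mul_one, one_mul] at hc
  exact smul_left_injective ℂ hC hc

def conjIntertwiner : Matrix (Fin 4) (Fin 4) ℂ := weylGamma 0 * weylGamma 1 * weylGamma 3

theorem conjIntertwiner_ne_zero : conjIntertwiner ≠ 0 := fun h => by
  simpa [conjIntertwiner, weylGamma, mul_apply, Fin.sum_univ_four] using congrFun₂ h 0 3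

theorem diracSubalgebra_le_twistedFixedSubalgebra :
    diracSubalgebra ≤
      twistedFixedSubalgebra Complex.conjAe.toAlgHom.mapMatrix conjIntertwiner := by
  refine Algebra.adjoin_le ?_
  rintro _ ⟨a, rfl⟩
  rw [SetLike.mem_coe, mem_twistedFixedSubalgebra]
  ext i j
  fin_cases a <;> fin_cases i <;> fin_cases j <;>
    simp [conjIntertwiner, weylGamma, mul_apply, Fin.sum_univ_four]

/-- If `S ∈ D` has determinant one and commutes with all gamma matrices, then `S = ±I`. -/
theorem eq_one_or_neg_one_of_central
    (S : Matrix (Fin 4) (Fin 4) ℂ) (hS : S ∈ diracSubalgebra)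
    (hdet : S.det = 1) (hcomm : ∀ a, S * weylGamma a = weylGamma a * S) :
    S = 1 ∨ S = -1 := by
  have hscalar := eq_smul_one_of_commute_weylGamma S hcomm
  have hreal : starRingEnd ℂ (S 0 0) = S 0 0 :=
    conj_eq_of_smul_one_mem_twistedFixedSubalgebra conjIntertwiner_ne_zero
      (hscalar ▸ diracSubalgebra_le_twistedFixedSubalgebra hS)
  obtain ⟨r, hr⟩ : ∃ r : ℝ, (r : ℂ) = S 0 0 := ⟨_, Complex.conj_eq_iff_re.mp hreal⟩
  rw [← hr] at hscalar
  have hr4 : r ^ 4 = 1 := by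
    rw [hscalar, det_smul, det_one, mul_one, Fintype.card_fin] at hdet
    exact_mod_cast hdet
  rcases (pow_eq_one_iff_of_ne_zero four_ne_zero).mp hr4 with rfl | ⟨rfl, -⟩ <;> simp [hscalar]
end
end

section
/- Let γ_0,γ_1,γ_2,γ_3 be the Weyl gamma matrices and D the real subalgebra of the complex 4×4 matrices they generate. If s ∈ D satisfies trace(s) = 0 and, for each a ∈ {0,1,2,3}, the commutator s γ_a − γ_a s lies in the real linear span of {γ_0, γ_1, γ_2, γ_3}, then s lies in the real linear span of the six products {γ_a γ_b : 0 ≤ a < b ≤ 3}. -/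
open Matrix

noncomputable section

/-!
`D` is spanned over `ℝ` by the sixteen ordered monomials `γ_A = ∏_{a ∈ A} γ_a`,
`A ⊆ {0,1,2,3}`, and these are orthogonal for the trace pairing `(x, y) ↦ tr (x y)`, with
`tr (γ_A γ_A) ≠ 0`. So `s ∈ D` lies in the span of the bivectors `γ_a γ_b` as soon as
`tr (s γ_A) = 0` for every `A` with `|A| ≠ 2`. For `A = ∅` this is `tr s = 0`. Every other
such `γ_A` is, up to a factor `±2`, a commutator `[γ_a, γ_B]` with `|B| ≠ 1`, and
`tr (s [γ_a, γ_B]) = tr ([s, γ_a] γ_B)` vanishes because `[s, γ_a]` is a combination of the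
`γ_c`, all orthogonal to `γ_B`.
-/

theorem Algebra.adjoin_toSubmodule_le_of_mul_mem {R A : Type*} [CommSemiring R] [Semiring A]
    [Algebra R A] {s : Set A} {S : Submodule R A} (h1 : 1 ∈ S)
    (hmul : ∀ x ∈ S, ∀ y ∈ s, x * y ∈ S) :
    Subalgebra.toSubmodule (Algebra.adjoin R s) ≤ S := by
  rw [Algebra.adjoin_eq_span, Submodule.span_le]
  intro x hx
  induction hx using Submonoid.closure_induction_right with
  | one => exact h1
  | mul_right x _ y hy hx => exact hmul x hx y hy

theorem LinearMap.IsOrthoᵢ.mem_span_image {K M N ι : Type*} [Field K] [AddCommMonoid M]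
    [Module K M] [AddCommGroup N] [Module K N] [Fintype ι] {B : M →ₗ[K] M →ₗ[K] N} {v : ι → M}
    (hv : B.IsOrthoᵢ v) (hvv : ∀ i, B (v i) (v i) ≠ 0) {x : M}
    (hx : x ∈ Submodule.span K (Set.range v)) {S : Set ι} (hS : ∀ i ∉ S, B x (v i) = 0) :
    x ∈ Submodule.span K (v '' S) := by
  obtain ⟨c, rfl⟩ := (Submodule.mem_span_range_iff_exists_fun K).mp hx
  have hc : ∀ i ∉ S, c i = 0 := fun i hi => by
    have h := hS i hi
    rw [map_sum, LinearMap.sum_apply, Finset.sum_eq_single i (fun j _ hji => by simp [hv hji])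
      (by simp), map_smul, LinearMap.smul_apply] at h
    exact (smul_eq_zero.mp h).resolve_right (hvv i)
  refine Submodule.sum_mem _ fun i _ => ?_
  by_cases hi : i ∈ S
  · exact Submodule.smul_mem _ _ (Submodule.subset_span ⟨i, hi, rfl⟩)
  · simp [hc i hi]

namespace Matrix

theorem trace_mul_commutator {n R : Type*} [Fintype n] [CommRing R] (x y z : Matrix n n R) :
    trace (x * (y * z - z * y)) = trace ((x * y - y * x) * z) := by
  rw [mul_sub, sub_mul, trace_sub, trace_sub, ← mul_assoc, ← mul_assoc, trace_mul_cycle x z y]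

variable (n R α : Type*) [Fintype n] [DecidableEq n] [CommSemiring R] [Semiring α] [Algebra R α]

def traceMulForm : Matrix n n α →ₗ[R] Matrix n n α →ₗ[R] α :=
  (LinearMap.mul R (Matrix n n α)).compr₂ (traceLinearMap n R α)

variable {n R α}

@[simp]
theorem traceMulForm_apply (x y : Matrix n n α) : traceMulForm n R α x y = trace (x * y) := rfl

end Matrix

def gammaMonomial {R : Type*} [Monoid R] {n : ℕ} (γ : Fin n → R) (A : Finset (Fin n)) : R :=
  (((List.finRange n).filter (· ∈ A)).map γ).prod

section gammaMonomial

variable {R : Type*} [Monoid R] {n : ℕ} (γ : Fin n → R)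

theorem map_gammaMonomial {S F : Type*} [Monoid S] [FunLike F R S] [MonoidHomClass F R S]
    (f : F) (A : Finset (Fin n)) : f (gammaMonomial γ A) = gammaMonomial (f ∘ γ) A := by
  simp [gammaMonomial, map_list_prod]

@[simp]
theorem gammaMonomial_empty : gammaMonomial γ ∅ = 1 := by
  simp [gammaMonomial]

@[simp]
theorem gammaMonomial_singleton (a : Fin n) : gammaMonomial γ {a} = γ a := by
  simp [gammaMonomial, List.filter_eq]

theorem gammaMonomial_pair {a b : Fin n} (hab : a < b) : gammaMonomial γ {a, b} = γ a * γ b := by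
  have : (List.finRange n).filter (· ∈ ({a, b} : Finset (Fin n))) = [a, b] :=
    ((List.sortedLT_finRange n).pairwise.filter _).eq_of_mem_iff (by simpa using hab) (by simp)
  rw [gammaMonomial, this]
  simp

end gammaMonomial

/-- `weylGamma` with Gaussian-integer entries: unlike `ℂ`, these have decidable equality, so
identities between the monomials are checked by evaluation. -/
def weylGammaInt : Fin 4 → Matrix (Fin 4) (Fin 4) GaussianInt :=
  ![!![0, 0, 1, 0; 0, 0, 0, 1; 1, 0, 0, 0; 0, 1, 0, 0],
    !![0, 0, 0, -1; 0, 0, -1, 0; 0, 1, 0, 0; 1, 0, 0, 0],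
    !![0, 0, 0, ⟨0, 1⟩; 0, 0, ⟨0, -1⟩, 0; 0, ⟨0, -1⟩, 0, 0; ⟨0, 1⟩, 0, 0, 0],
    !![0, 0, -1, 0; 0, 0, 0, 1; 1, 0, 0, 0; 0, -1, 0, 0]]

theorem exists_gammaMonomial_weylGammaInt_mul_eq : ∀ (A : Finset (Fin 4)) (a : Fin 4), ∃ B,
    gammaMonomial weylGammaInt A * weylGammaInt a = gammaMonomial weylGammaInt B ∨
    gammaMonomial weylGammaInt A * weylGammaInt a = -gammaMonomial weylGammaInt B := by
  decide +kernel

theorem trace_gammaMonomial_weylGammaInt_mul_eq_zero : ∀ A B : Finset (Fin 4), A ≠ B →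
    trace (gammaMonomial weylGammaInt A * gammaMonomial weylGammaInt B) = 0 := by
  decide +kernel

theorem trace_gammaMonomial_weylGammaInt_mul_self_ne_zero : ∀ A : Finset (Fin 4),
    trace (gammaMonomial weylGammaInt A * gammaMonomial weylGammaInt A) ≠ 0 := by
  decide +kernel

/-- Witnesses: `γ_b = ±½ [γ_a, γ_b γ_a]` for `a ≠ b`; `γ_A = ±½ [γ_a, γ_{0123}]` for
`A = {0,1,2,3} \ {a}`; `γ_{0123} = ½ [γ_0, γ_{123}]`. -/
theorem exists_commutator_weylGammaInt_eq : ∀ A : Finset (Fin 4), A.card ≠ 0 → A.card ≠ 2 →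
    ∃ a B, B.card ≠ 1 ∧ ∃ k ∈ ({2, -2} : Finset ℤ),
      weylGammaInt a * gammaMonomial weylGammaInt B - gammaMonomial weylGammaInt B * weylGammaInt a
        = k • gammaMonomial weylGammaInt A := by
  decide +kernel

theorem map_weylGammaInt (a : Fin 4) :
    GaussianInt.toComplex.mapMatrix (weylGammaInt a) = weylGamma a := by
  ext i j
  fin_cases a <;> fin_cases i <;> fin_cases j <;>
    simp [weylGamma, weylGammaInt, GaussianInt.toComplex_def']

theorem map_gammaMonomial_weylGammaInt (A : Finset (Fin 4)) :
    GaussianInt.toComplex.mapMatrix (gammaMonomial weylGammaInt A) = gammaMonomial weylGamma A := by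
  rw [map_gammaMonomial]
  exact congrArg (gammaMonomial · A) (funext map_weylGammaInt)

theorem trace_gammaMonomial_weylGamma_mul (A B : Finset (Fin 4)) :
    trace (gammaMonomial weylGamma A * gammaMonomial weylGamma B) =
      GaussianInt.toComplex
        (trace (gammaMonomial weylGammaInt A * gammaMonomial weylGammaInt B)) := by
  rw [AddMonoidHom.map_trace, ← RingHom.mapMatrix_apply, map_mul,
    map_gammaMonomial_weylGammaInt, map_gammaMonomial_weylGammaInt]

theorem exists_gammaMonomial_weylGamma_mul_eq (A : Finset (Fin 4)) (a : Fin 4) : ∃ B,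
    gammaMonomial weylGamma A * weylGamma a = gammaMonomial weylGamma B ∨
    gammaMonomial weylGamma A * weylGamma a = -gammaMonomial weylGamma B := by
  obtain ⟨B, hB⟩ := exists_gammaMonomial_weylGammaInt_mul_eq A a
  refine ⟨B, hB.imp ?_ ?_⟩ <;> intro h <;>
    simpa only [map_mul, map_neg, map_weylGammaInt, map_gammaMonomial_weylGammaInt]
      using congrArg GaussianInt.toComplex.mapMatrix h

theorem exists_commutator_weylGamma_eq (A : Finset (Fin 4)) (h0 : A.card ≠ 0) (h2 : A.card ≠ 2) :
    ∃ a B, B.card ≠ 1 ∧ ∃ k : ℤ, k ≠ 0 ∧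
      weylGamma a * gammaMonomial weylGamma B - gammaMonomial weylGamma B * weylGamma a =
        k • gammaMonomial weylGamma A := by
  obtain ⟨a, B, hB, k, hk, h⟩ := exists_commutator_weylGammaInt_eq A h0 h2
  refine ⟨a, B, hB, k, by rintro rfl; simp at hk, ?_⟩
  simpa only [map_mul, map_sub, map_zsmul, map_weylGammaInt, map_gammaMonomial_weylGammaInt]
    using congrArg GaussianInt.toComplex.mapMatrix h

theorem diracSubalgebra_le_span_gammaMonomial :
    Subalgebra.toSubmodule diracSubalgebra ≤
      Submodule.span ℝ (Set.range (gammaMonomial weylGamma)) := by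
  refine Algebra.adjoin_toSubmodule_le_of_mul_mem
    (Submodule.subset_span ⟨∅, gammaMonomial_empty _⟩) ?_
  rintro x hx _ ⟨a, rfl⟩
  suffices Submodule.span ℝ (Set.range (gammaMonomial weylGamma)) ≤
      (Submodule.span ℝ (Set.range (gammaMonomial weylGamma))).comap
        (LinearMap.mulRight ℝ (weylGamma a)) from this hx
  rw [Submodule.span_le]
  rintro _ ⟨A, rfl⟩
  obtain ⟨B, hB | hB⟩ := exists_gammaMonomial_weylGamma_mul_eq A a <;>
  · simp only [SetLike.mem_coe, Submodule.mem_comap, LinearMap.mulRight_apply, hB,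
      Submodule.neg_mem_iff]
    exact Submodule.subset_span (Set.mem_range_self B)

theorem isOrthoᵢ_traceMulForm_gammaMonomial_weylGamma :
    (traceMulForm (Fin 4) ℝ ℂ).IsOrthoᵢ (gammaMonomial weylGamma) := fun A B hAB => by
  simp [Function.onFun, trace_gammaMonomial_weylGamma_mul,
    trace_gammaMonomial_weylGammaInt_mul_eq_zero A B hAB]

theorem traceMulForm_gammaMonomial_weylGamma_self_ne_zero (A : Finset (Fin 4)) :
    traceMulForm (Fin 4) ℝ ℂ (gammaMonomial weylGamma A) (gammaMonomial weylGamma A) ≠ 0 := by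
  simpa [trace_gammaMonomial_weylGamma_mul] using
    trace_gammaMonomial_weylGammaInt_mul_self_ne_zero A

theorem trace_mul_commutator_gammaMonomial_eq_zero {s : Matrix (Fin 4) (Fin 4) ℂ}
    (hcomm : ∀ a, s * weylGamma a - weylGamma a * s ∈ Submodule.span ℝ (Set.range weylGamma))
    (a : Fin 4) {B : Finset (Fin 4)} (hB : B.card ≠ 1) :
    trace (s * (weylGamma a * gammaMonomial weylGamma B - gammaMonomial weylGamma B * weylGamma a))
      = 0 := by
  rw [trace_mul_commutator]
  suffices Submodule.span ℝ (Set.range weylGamma) ≤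
      LinearMap.ker ((traceMulForm (Fin 4) ℝ ℂ).flip (gammaMonomial weylGamma B)) from
    this (hcomm a)
  rw [Submodule.span_le]
  rintro _ ⟨c, rfl⟩
  have hcB : {c} ≠ B := fun h => hB (h ▸ Finset.card_singleton c)
  simpa [Function.onFun] using isOrthoᵢ_traceMulForm_gammaMonomial_weylGamma hcB

theorem trace_mul_gammaMonomial_eq_zero {s : Matrix (Fin 4) (Fin 4) ℂ}
    (hcomm : ∀ a, s * weylGamma a - weylGamma a * s ∈ Submodule.span ℝ (Set.range weylGamma))
    (htr : s.trace = 0) {A : Finset (Fin 4)} (hA : A.card ≠ 2) :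
    trace (s * gammaMonomial weylGamma A) = 0 := by
  rcases eq_or_ne A.card 0 with h0 | h0
  · simp [Finset.card_eq_zero.mp h0, htr]
  obtain ⟨a, B, hB, k, hk, hcommutator⟩ := exists_commutator_weylGamma_eq A h0 hA
  have := trace_mul_commutator_gammaMonomial_eq_zero hcomm a hB
  rw [hcommutator, mul_smul_comm, trace_smul] at this
  exact (smul_eq_zero.mp this).resolve_left hk

/-- If `s ∈ D` is traceless and its commutator with every gamma matrix lies in the real
span of the gamma matrices, then `s` lies in the real span of the products
`γ_a γ_b` with `a < b` (the spin Lie algebra). -/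
theorem mem_span_gammaProducts_of_traceless
    (s : Matrix (Fin 4) (Fin 4) ℂ) (hs : s ∈ diracSubalgebra)
    (htr : s.trace = 0)
    (hcomm : ∀ a, s * weylGamma a - weylGamma a * s ∈
      Submodule.span ℝ (Set.range weylGamma)) :
    s ∈ Submodule.span ℝ
      {x : Matrix (Fin 4) (Fin 4) ℂ |
        ∃ a b : Fin 4, a < b ∧ x = weylGamma a * weylGamma b} := by
  have hs' : s ∈ Submodule.span ℝ (gammaMonomial weylGamma '' {A | A.card = 2}) :=
    isOrthoᵢ_traceMulForm_gammaMonomial_weylGamma.mem_span_image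
      traceMulForm_gammaMonomial_weylGamma_self_ne_zero (diracSubalgebra_le_span_gammaMonomial hs)
      fun A hA => trace_mul_gammaMonomial_eq_zero hcomm htr hA
  refine Submodule.span_mono ?_ hs'
  rintro _ ⟨A, hA, rfl⟩
  obtain ⟨a, b, hab, rfl⟩ := Finset.card_eq_two.mp hA
  rcases hab.lt_or_gt with hab | hab
  · exact ⟨a, b, hab, gammaMonomial_pair _ hab⟩
  · exact ⟨b, a, hab, Finset.pair_comm a b ▸ gammaMonomial_pair _ hab⟩
end
end

section
/- Let H be a complex Hilbert space and T a densely defined self-adjoint operator on H (T equals its Hilbert-space adjoint T*) which is unbounded, i.e. there is no constant c ≥ 0 with ‖Tψ‖ ≤ c‖ψ‖ for all ψ in the domain of T. Then the domain of T is an F_σ subset of H (a countable union of closed sets) which is meagre; equivalently, the complement of the domain of T contains a dense G_δ subset of H. -/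
open scoped LinearPMap InnerProductSpace

noncomputable section

/-! Since `T = T†`, the domain of `T` consists of the `x` for which `y ↦ ⟪x, T y⟫` is bounded on
`dom T`, i.e. it is the union of the closed sets `{x | ∀ y, ‖⟪x, T y⟫‖ ≤ n ‖y‖}`. If one of them
contained a ball `closedBall x₀ ε`, then `⟪u, T y⟫ = ⟪x₀ + u, T y⟫ - ⟪x₀, T y⟫` would be bounded
by `2 n ‖y‖` for `‖u‖ ≤ ε`, forcing `ε ‖T y‖ ≤ 2 n ‖y‖`. So when `T` is unbounded each of them is
nowhere dense. -/

section InnerProductSpace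

variable {𝕜 E F : Type*} [RCLike 𝕜] [NormedAddCommGroup E] [InnerProductSpace 𝕜 E]
  [NormedAddCommGroup F] [InnerProductSpace 𝕜 F]

theorem mul_norm_le_of_forall_norm_inner_le {v : E} {ε C : ℝ} (hε : 0 ≤ ε)
    (h : ∀ u : E, ‖u‖ ≤ ε → ‖⟪u, v⟫_𝕜‖ ≤ C) : ε * ‖v‖ ≤ C := by
  rcases eq_or_ne v 0 with rfl | hv
  · simpa using h 0 (by simpa using hε)
  have hv' : 0 < ‖v‖ := norm_pos_iff.2 hv
  set c : ℝ := ε / ‖v‖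
  have hc : 0 ≤ c := by positivity
  have hcv : c * ‖v‖ = ε := div_mul_cancel₀ _ hv'.ne'
  have hnorm : ‖(c : 𝕜) • v‖ = ε := by
    rw [norm_smul, RCLike.norm_ofReal, abs_of_nonneg hc, hcv]
  calc ε * ‖v‖ = c * ‖v‖ ^ 2 := by rw [← hcv]; ring
    _ = ‖⟪(c : 𝕜) • v, v⟫_𝕜‖ := by
      rw [inner_smul_left, RCLike.conj_ofReal, norm_mul, RCLike.norm_ofReal, abs_of_nonneg hc,
        inner_self_eq_norm_sq_to_K, norm_pow, RCLike.norm_ofReal, abs_norm]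
    _ ≤ C := h _ hnorm.le

namespace LinearPMap

def adjointBoundSet (T : E →ₗ.[𝕜] F) (r : ℝ) : Set F :=
  {x | ∀ y : T.domain, ‖⟪x, T y⟫_𝕜‖ ≤ r * ‖(y : E)‖}

variable (T : E →ₗ.[𝕜] F)

theorem isClosed_adjointBoundSet (r : ℝ) : _root_.IsClosed (T.adjointBoundSet r) := by
  have : T.adjointBoundSet r = ⋂ y : T.domain, {x | ‖⟪x, T y⟫_𝕜‖ ≤ r * ‖(y : E)‖} := by
    ext; simp [adjointBoundSet]
  rw [this]
  exact isClosed_iInter fun y => isClosed_le (by fun_prop) continuous_const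

theorem adjoint_domain_eq_iUnion_adjointBoundSet [CompleteSpace E] (hT : Dense (T.domain : Set E)) :
    (T†.domain : Set F) = ⋃ n : ℕ, T.adjointBoundSet n := by
  ext x
  simp only [SetLike.mem_coe, Set.mem_iUnion]
  constructor
  · intro hx
    refine ⟨⌈‖T† ⟨x, hx⟩‖⌉₊, fun y => ?_⟩
    calc ‖⟪x, T y⟫_𝕜‖ = ‖⟪T† ⟨x, hx⟩, (y : E)⟫_𝕜‖ := by rw [adjoint_isFormalAdjoint hT ⟨x, hx⟩ y]
      _ ≤ ‖T† ⟨x, hx⟩‖ * ‖(y : E)‖ := norm_inner_le_norm _ _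
      _ ≤ ⌈‖T† ⟨x, hx⟩‖⌉₊ * ‖(y : E)‖ := by gcongr; exact Nat.le_ceil _
  · rintro ⟨n, hn⟩
    exact AddMonoidHomClass.continuous_of_bound ((innerₛₗ 𝕜 x).comp T.toFun) n
      fun y => by simpa using hn y

theorem exists_bound_of_interior_adjointBoundSet_nonempty {r : ℝ} (hr : 0 ≤ r)
    (h : (interior (T.adjointBoundSet r)).Nonempty) :
    ∃ c : ℝ, 0 ≤ c ∧ ∀ y : T.domain, ‖T y‖ ≤ c * ‖(y : E)‖ := by
  obtain ⟨x₀, hx₀⟩ := h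
  obtain ⟨ε, hε, hball⟩ := Metric.nhds_basis_closedBall.mem_iff.1 (mem_interior_iff_mem_nhds.1 hx₀)
  refine ⟨2 * r / ε, by positivity, fun y => ?_⟩
  rw [div_mul_eq_mul_div, le_div_iff₀ hε, mul_comm]
  refine mul_norm_le_of_forall_norm_inner_le (𝕜 := 𝕜) hε.le fun u hu => ?_
  have hx₀u : x₀ + u ∈ T.adjointBoundSet r :=
    hball (by simpa [dist_eq_norm] using hu)
  calc ‖⟪u, T y⟫_𝕜‖ = ‖⟪x₀ + u, T y⟫_𝕜 - ⟪x₀, T y⟫_𝕜‖ := by rw [inner_add_left, add_sub_cancel_left]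
    _ ≤ ‖⟪x₀ + u, T y⟫_𝕜‖ + ‖⟪x₀, T y⟫_𝕜‖ := norm_sub_le _ _
    _ ≤ r * ‖(y : E)‖ + r * ‖(y : E)‖ :=
      add_le_add (hx₀u y) (hball (Metric.mem_closedBall_self hε.le) y)
    _ = 2 * r * ‖(y : E)‖ := by ring

theorem isMeagre_adjoint_domain [CompleteSpace E] (hT : Dense (T.domain : Set E))
    (hunbounded : ¬∃ c : ℝ, 0 ≤ c ∧ ∀ y : T.domain, ‖T y‖ ≤ c * ‖(y : E)‖) :
    IsMeagre (T†.domain : Set F) := by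
  rw [T.adjoint_domain_eq_iUnion_adjointBoundSet hT]
  refine isMeagre_iUnion fun n => IsNowhereDense.isMeagre ?_
  rw [(T.isClosed_adjointBoundSet n).isNowhereDense_iff, ← Set.not_nonempty_iff_eq_empty]
  exact fun h => hunbounded (T.exists_bound_of_interior_adjointBoundSet_nonempty n.cast_nonneg h)

end LinearPMap

end InnerProductSpace

/-- The domain of an unbounded, densely defined self-adjoint operator on a complex
Hilbert space is a meagre `F_σ` subset of the space. -/
theorem domain_of_unbounded_selfAdjoint_isMeagre_Fsigma
    {H : Type*} [NormedAddCommGroup H] [InnerProductSpace ℂ H] [CompleteSpace H]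
    (T : H →ₗ.[ℂ] H) (hdense : Dense (T.domain : Set H))
    (hsa : T.adjoint = T)
    (hunbounded : ¬∃ c : ℝ, 0 ≤ c ∧ ∀ ψ : T.domain, ‖T ψ‖ ≤ c * ‖(ψ : H)‖) :
    (∃ f : ℕ → Set H, (∀ n, IsClosed (f n)) ∧ (T.domain : Set H) = ⋃ n, f n) ∧
    IsMeagre (T.domain : Set H) := by
  rw [← hsa]
  refine ⟨⟨fun n => T.adjointBoundSet n, fun n => T.isClosed_adjointBoundSet n,
    T.adjoint_domain_eq_iUnion_adjointBoundSet hdense⟩, ?_⟩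
  exact T.isMeagre_adjoint_domain hdense hunbounded
end
end

section
/- Let B be a complex Banach space with continuous dual B′, let O ⊆ ℝⁿ be open, let K ⊆ O be compact and convex, and let f : O → B be a function such that for every φ ∈ B′ the scalar function φ∘f is infinitely differentiable on O. Then there exists a constant C ≥ 0 such that ‖f(x) − f(y)‖ ≤ C‖x − y‖ for all x, y ∈ K. -/
/-!
Each scalar function `φ ∘ f` is `C¹` on the compact convex set `K`, hence Lipschitz there. So the
difference quotients `‖x - y‖⁻¹ • (f x - f y)`, `x, y ∈ K`, form a weakly bounded family, and the
uniform boundedness principle, applied to them as functionals on the Banach space `B′`, makes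
them norm bounded.
-/

noncomputable section

open NormedSpace

section WeakBounds

variable {𝕜 : Type*} [RCLike 𝕜] {E : Type*} [SeminormedAddCommGroup E] [NormedSpace 𝕜 E]

theorem exists_norm_le_of_forall_dual_norm_le {ι : Type*} (v : ι → E)
    (h : ∀ φ : StrongDual 𝕜 E, ∃ C, ∀ i, ‖φ (v i)‖ ≤ C) : ∃ C, ∀ i, ‖v i‖ ≤ C := by
  obtain ⟨C, hC⟩ := banach_steinhaus (g := fun i => inclusionInDoubleDual 𝕜 E (v i)) h
  exact ⟨C, fun i => (inclusionInDoubleDualLi 𝕜).norm_map (v i) ▸ hC i⟩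

theorem exists_lipschitzOnWith_of_forall_dual {α : Type*} [MetricSpace α] {f : α → E}
    {s : Set α} (h : ∀ φ : StrongDual 𝕜 E, ∃ K, LipschitzOnWith K (φ ∘ f) s) :
    ∃ K, LipschitzOnWith K f s := by
  let quotient (p : s × s) : E := (dist (p.1 : α) p.2 : 𝕜)⁻¹ • (f p.1 - f p.2)
  have weakly_bounded (φ : StrongDual 𝕜 E) : ∃ C, ∀ p, ‖φ (quotient p)‖ ≤ C := by
    obtain ⟨K, hK⟩ := h φ
    refine ⟨K, fun ⟨⟨x, hx⟩, ⟨y, hy⟩⟩ => ?_⟩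
    have hφ : ‖φ (f x) - φ (f y)‖ ≤ K * dist x y :=
      dist_eq_norm (φ (f x)) _ ▸ hK.dist_le_mul x hx y hy
    calc ‖φ (quotient (⟨x, hx⟩, ⟨y, hy⟩))‖ = (dist x y)⁻¹ * ‖φ (f x) - φ (f y)‖ := by
          simp [quotient, map_sub]
      _ ≤ (dist x y)⁻¹ * (K * dist x y) := by gcongr
      _ ≤ K := by
          rcases eq_or_lt_of_le (dist_nonneg (x := x) (y := y)) with hxy | hxy
          · simp [← hxy]
          · rw [mul_comm, mul_assoc, mul_inv_cancel₀ hxy.ne', mul_one]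
  obtain ⟨C, hC⟩ := exists_norm_le_of_forall_dual_norm_le quotient weakly_bounded
  refine ⟨C.toNNReal, LipschitzOnWith.of_dist_le' fun x hx y hy => ?_⟩
  rcases eq_or_ne x y with rfl | hxy
  · simp
  have hpos : 0 < dist x y := dist_pos.2 hxy
  have hq := hC (⟨x, hx⟩, ⟨y, hy⟩)
  simp only [quotient] at hq
  rw [norm_smul, norm_inv, RCLike.norm_ofReal, abs_of_pos hpos, inv_mul_le_iff₀ hpos] at hq
  rw [dist_eq_norm, mul_comm]
  exact hq

end WeakBounds

theorem lipschitz_on_compact_convex_of_weakly_smooth_general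
    {B : Type*} [NormedAddCommGroup B] [NormedSpace ℂ B]
    {n : ℕ} {O K : Set (EuclideanSpace ℝ (Fin n))}
    (hK : IsCompact K) (hKconv : Convex ℝ K) (hKO : K ⊆ O)
    (f : EuclideanSpace ℝ (Fin n) → B)
    (hf : ∀ φ : B →L[ℂ] ℂ, ContDiffOn ℝ (⊤ : ℕ∞) (fun x => φ (f x)) O) :
    ∃ C : ℝ, 0 ≤ C ∧ ∀ x ∈ K, ∀ y ∈ K, ‖f x - f y‖ ≤ C * ‖x - y‖ := by
  obtain ⟨C, hC⟩ := exists_lipschitzOnWith_of_forall_dual (𝕜 := ℂ) (s := K) fun φ =>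
    ((hf φ).mono hKO).exists_lipschitzOnWith (by simp) hKconv hK
  exact ⟨C, C.2, fun x hx y hy => hC.norm_sub_le hx hy⟩

/-- If `f : O → B` is a Banach-space-valued function on an open set `O ⊆ ℝⁿ` which is
weakly smooth (i.e. `φ ∘ f` is infinitely differentiable on `O` for every continuous
linear functional `φ`), then `f` is Lipschitz on every compact convex `K ⊆ O`. -/
theorem lipschitz_on_compact_convex_of_weakly_smooth
    {B : Type*} [NormedAddCommGroup B] [NormedSpace ℂ B] [CompleteSpace B]
    {n : ℕ} {O K : Set (EuclideanSpace ℝ (Fin n))}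
    (hO : IsOpen O) (hK : IsCompact K) (hKconv : Convex ℝ K) (hKO : K ⊆ O)
    (f : EuclideanSpace ℝ (Fin n) → B)
    (hf : ∀ φ : B →L[ℂ] ℂ, ContDiffOn ℝ (⊤ : ℕ∞) (fun x => φ (f x)) O) :
    ∃ C : ℝ, 0 ≤ C ∧ ∀ x ∈ K, ∀ y ∈ K, ‖f x - f y‖ ≤ C * ‖x - y‖ :=
  lipschitz_on_compact_convex_of_weakly_smooth_general hK hKconv hKO f hf
end
end
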